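/- Let A and B be separable C*-algebras, π : A → B a surjective star-algebra homomorphism, and γ : B → A a star-algebra homomorphism with π ∘ γ = id_B (a splitting of the exact sequence 0 → ker π → A → B → 0). Let τ be an MA trace on A that vanishes on ker π. Then the induced trace τ̄ := τ ∘ γ on B (which satisfies τ̄ ∘ π = τ) is an MA trace on B. -/

import Mathlib

open scoped Matrix.Norms.L2Operator ComplexOrder
open Matrix Filter TopologicalSpace

noncomputable section

/-- `n × n` complex matrices endowed with the ℓ²-operator norm. -/
abbrev MatC (n : ℕ) : Type := Matrix (Fin n) (Fin n) ℂ

/-- A map into matrices is `*`-linear if it is `ℂ`-linear and star-preserving. -/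
def IsStarLinear {A : Type*} [AddCommGroup A] [Module ℂ A] [Star A] {n : ℕ}
    (φ : A → MatC n) : Prop :=
  IsLinearMap ℂ φ ∧ ∀ a, φ (star a) = star (φ a)

/-- The normalized trace `trₙ` on `n × n` matrices. -/
def trn {n : ℕ} (α : MatC n) : ℂ := Matrix.trace α / (n : ℂ)

/-- The 2-norm `‖α‖_{2,tr} = trₙ(α*α)^{1/2}` induced by the normalized trace. -/
def l2tr {n : ℕ} (α : MatC n) : ℝ := Real.sqrt (trn (star α * α)).re

/-- A C*-algebra `A` is MF: for every finite `F ⊆ A` and `ε > 0` there are `n ≥ 1` and a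
`*`-linear map `φ : A → Mₙ` which is `ε`-almost multiplicative and `ε`-almost norm-preserving
on `F`. -/
def IsMFAlgebra (A : Type*) [NonUnitalCStarAlgebra A] : Prop :=
  ∀ (F : Finset A) (ε : ℝ), 0 < ε → ∃ n : ℕ, 0 < n ∧ ∃ φ : A → MatC n,
    IsStarLinear φ ∧
    (∀ a ∈ F, ∀ a' ∈ F, ‖φ (a * a') - φ a * φ a'‖ < ε) ∧
    (∀ a ∈ F, ‖a‖ - ε < ‖φ a‖)

/-- A trace: a positive linear functional satisfying `τ(ab) = τ(ba)`. -/
def IsTrace {A : Type*} [NonUnitalRing A] [Star A] [Module ℂ A] (τ : A →ₗ[ℂ] ℂ) : Prop :=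
  (∀ a, 0 ≤ τ (star a * a)) ∧ ∀ a b, τ (a * b) = τ (b * a)

/-- An MF trace. -/
def IsMFTrace {A : Type*} [NonUnitalRing A] [Star A] [Module ℂ A] (τ : A →ₗ[ℂ] ℂ) : Prop :=
  ∀ (F : Finset A) (ε : ℝ), 0 < ε → ∃ n : ℕ, 0 < n ∧ ∃ φ : A → MatC n,
    IsStarLinear φ ∧
    (∀ a ∈ F, ∀ a' ∈ F, ‖φ (a * a') - φ a * φ a'‖ < ε) ∧
    (∀ a ∈ F, ‖τ a - trn (φ a)‖ < ε)

/-- An MA (matricially amenable) trace. -/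
def IsMATrace {A : Type*} [NonUnitalRing A] [Star A] [Module ℂ A] (τ : A →ₗ[ℂ] ℂ) : Prop :=
  ∀ (F : Finset A) (ε : ℝ), 0 < ε → ∃ n : ℕ, 0 < n ∧ ∃ φ : A → MatC n,
    IsStarLinear φ ∧
    (∀ a ∈ F, ∀ a' ∈ F, l2tr (φ (a * a') - φ a * φ a') < ε) ∧
    (∀ a ∈ F, ‖τ a - trn (φ a)‖ < ε)

/-- An MF set of operators on a Hilbert space. -/
def IsMFSet {H : Type*} [NormedAddCommGroup H] [InnerProductSpace ℂ H] [CompleteSpace H]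
    (M : Set (H →L[ℂ] H)) : Prop :=
  ∀ (F : Finset (H →L[ℂ] H)), ↑F ⊆ M → ∀ (H₀ : Finset H) (ε : ℝ), 0 < ε →
    ∃ P : H →L[ℂ] H, IsSelfAdjoint P ∧ P * P = P ∧
      (∀ T ∈ F, ‖P * T - T * P‖ < ε) ∧ ∀ x ∈ H₀, ‖x‖ - ε < ‖P x‖

section Pullback

variable {A B : Type*} [NonUnitalRing A] [Star A] [Module ℂ A]
  [NonUnitalRing B] [Star B] [Module ℂ B]

theorem IsStarLinear.comp_nonUnitalStarAlgHom {n : ℕ} {φ : A → MatC n} (hφ : IsStarLinear φ)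
    (γ : B →⋆ₙₐ[ℂ] A) : IsStarLinear (φ ∘ γ) :=
  ⟨((hφ.1.mk' φ).comp (γ : B →ₗ[ℂ] A)).isLinear, fun b => by simp [map_star, hφ.2]⟩

/-- Matricial approximations of `τ` on `γ '' F` restrict along `γ` to approximations of
`τ ∘ γ` on `F`, since `γ` is multiplicative. -/
theorem IsMATrace.comp_nonUnitalStarAlgHom {τ : A →ₗ[ℂ] ℂ} (hτ : IsMATrace τ)
    (γ : B →⋆ₙₐ[ℂ] A) : IsMATrace (τ ∘ₗ (γ : B →ₗ[ℂ] A)) := by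
  classical
  intro F ε hε
  obtain ⟨n, hn, φ, hφ, hmul, htr⟩ := hτ (F.image γ) ε hε
  refine ⟨n, hn, φ ∘ γ, hφ.comp_nonUnitalStarAlgHom γ, fun b hb b' hb' => ?_,
    fun b hb => htr (γ b) (Finset.mem_image_of_mem γ hb)⟩
  simpa [map_mul] using
    hmul (γ b) (Finset.mem_image_of_mem γ hb) (γ b') (Finset.mem_image_of_mem γ hb')

end Pullback

theorem isMATrace_quotient_of_split_general (A B : Type*) [NonUnitalCStarAlgebra A]
    [NonUnitalCStarAlgebra B]
    (γ : B →⋆ₙₐ[ℂ] A)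
    (τ : A →ₗ[ℂ] ℂ)
    (hMA : IsMATrace τ) :
    IsMATrace (τ ∘ₗ (γ : B →ₗ[ℂ] A)) :=
  hMA.comp_nonUnitalStarAlgHom γ

/-- If `0 → ker π → A → B → 0` splits via `γ : B → A` (so `π ∘ γ = id_B`) and `τ` is an MA
trace on `A` vanishing on `ker π`, then the induced trace `τ̄ = τ ∘ γ` on `B` is MA. -/
theorem isMATrace_quotient_of_split (A B : Type*) [NonUnitalCStarAlgebra A]
    [NonUnitalCStarAlgebra B] [SeparableSpace A] [SeparableSpace B]
    (π : A →⋆ₙₐ[ℂ] B) (hsurj : Function.Surjective π)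
    (γ : B →⋆ₙₐ[ℂ] A) (hsplit : ∀ b : B, π (γ b) = b)
    (τ : A →ₗ[ℂ] ℂ) (hτ : IsTrace τ) (hker : ∀ a : A, π a = 0 → τ a = 0)
    (hMA : IsMATrace τ) :
    IsMATrace (τ ∘ₗ (γ : B →ₗ[ℂ] A)) :=
  isMATrace_quotient_of_split_general A B γ τ hMA
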